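/- Let n ≥ 1 and consider the two lexical matchings M^n_{2n+1,n+1} and M^{n+1}_{2n+1,n+1} between levels n+1 and n+2 of Q_{2n+1}. A vertex x in level n+1 of Q_{2n+1} whose last bit is 0 is matched by M^n_{2n+1,n+1} and unmatched by M^{n+1}_{2n+1,n+1} if and only if x = y∘0 for some y ∈ D^{=0}_{2n,n+1}; a vertex x in level n+1 whose last bit is 1 is matched by M^n_{2n+1,n+1} and unmatched by M^{n+1}_{2n+1,n+1} if and only if x = y∘1 for some y ∈ D^{=0}_{2n,n} (here ∘ denotes concatenation of one bit at the end). -/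

import Mathlib

/-- The Hamming weight of a bitstring of length `n`, i.e., its number of 1-bits. -/
def wt {n : ℕ} (x : Fin n → Bool) : ℕ := (Finset.univ.filter fun i => x i = true).card

/-- The `n`-dimensional hypercube: vertices are bitstrings of length `n`, two of which are
adjacent iff they differ in exactly one position. -/
def cube (n : ℕ) : SimpleGraph (Fin n → Bool) where
  Adj x y := hammingDist x y = 1
  symm := ⟨fun x y h => (hammingDist_comm y x).trans h⟩
  loopless := ⟨fun x h => by simp [hammingDist_self] at h⟩
/-- The number of 1-bits among the first `j` bits of `x` (interpreting a bitstring as a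
lattice path, this determines the height after `j` steps). -/
def onesUpTo {n : ℕ} (x : Fin n → Bool) (j : ℕ) : ℕ :=
  (Finset.univ.filter fun i : Fin n => i.val < j ∧ x i = true).card

/-- The height of the lattice path of `x` after `j` steps: number of 1s minus number of 0s
among the first `j` bits (appended steps beyond the length of `x` being down-steps). -/
def hgt {n : ℕ} (x : Fin n → Bool) (j : ℕ) : ℤ := 2 * (onesUpTo x j : ℤ) - (j : ℤ)

/-- The length of the extended lattice path `x^↑`: if the final height `2·wt x − n` is `≥ −1`,
down-steps are appended until the path ends at height `−1` (total length `2·wt x + 1`);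
otherwise nothing is appended. -/
def extLen {n : ℕ} (x : Fin n → Bool) : ℕ := max n (2 * wt x + 1)

/-- Position `j` (0-indexed) of the extended path `x^↑` is a down-step: either it is a 0-bit
of `x`, or one of the appended down-steps. -/
def isDownStep {n : ℕ} (x : Fin n → Bool) (j : ℕ) : Prop :=
  j < extLen x ∧ ∀ h : j < n, x ⟨j, h⟩ = false

/-- The `i`-lexical matching `M^i_{n,k}` between levels `k` and `k+1` of the `n`-cube, as a
relation: `lexUp n k i x y` holds iff `x` lies in level `k` and `y = M^{i,↑}_{n,k}(x)`, i.e.,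
`y` is obtained from `x` by flipping to 1 the 0-bit at the `i`-th down-step of `x^↑` in the
order of decreasing starting height, ties broken from right to left, counting from 0,
provided this down-step lies within `x`. -/
def lexUp (n k i : ℕ) (x y : Fin n → Bool) : Prop :=
  wt x = k ∧ ∃ d : ℕ, d < n ∧ isDownStep x d ∧
    ({j : ℕ | isDownStep x j ∧ (hgt x d < hgt x j ∨ (hgt x j = hgt x d ∧ d < j))}).ncard = i ∧
    y = fun t : Fin n => if t.val = d then true else x t
/-- `x ∈ D_{m,k}`: a bitstring of length `m` with exactly `k` 1-bits such that every prefix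
contains at least as many 1s as 0s. -/
def inD (m k : ℕ) (x : Fin m → Bool) : Prop :=
  wt x = k ∧ ∀ j ≤ m, j ≤ 2 * onesUpTo x j

/-- `x ∈ D^{>0}_{m,k}`: moreover every nonempty prefix contains strictly more 1s than 0s. -/
def inDgt0 (m k : ℕ) (x : Fin m → Bool) : Prop :=
  wt x = k ∧ ∀ j, 1 ≤ j → j ≤ m → j < 2 * onesUpTo x j

/-- `x ∈ D^{=0}_{m,k}`: in `D_{m,k}` with at least one nonempty prefix containing equally
many 1s and 0s. -/
def inDeq0 (m k : ℕ) (x : Fin m → Bool) : Prop :=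
  inD m k x ∧ ∃ j, 1 ≤ j ∧ j ≤ m ∧ j = 2 * onesUpTo x j

/-- `x ∈ D^-_{m,k}`: a bitstring of length `m` with exactly `k` 1-bits such that exactly one
prefix contains strictly fewer 1s than 0s. -/
def inDminus (m k : ℕ) (x : Fin m → Bool) : Prop :=
  wt x = k ∧ ({j : ℕ | j ≤ m ∧ 2 * onesUpTo x j < j}).ncard = 1

/-!
The down-steps of `x^↑` are the `n` down-steps of `x` and two appended ones, starting at heights
`1` and `0`. The last one in lexical order (rank `n + 1`) is the leftmost lowest one; it is the
appended step at height `0` exactly when every down-step of `x` starts at height `≥ 1`, i.e. when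
the path of `x` never goes below `0`. In that case the step of rank `n` is the leftmost down-step
of `x` starting at height `1` if there is one (a return of the path to `0`), and otherwise the
appended step at height `1`. Since `x` ends at height `1`, these conditions only concern
`Fin.init x`.
-/

namespace LexMatching

section Prefix

variable {m : ℕ} (x : Fin m → Bool)

lemma onesUpTo_eq_wt_of_le {j : ℕ} (hj : m ≤ j) : onesUpTo x j = wt x := by
  unfold onesUpTo wt
  congr 1
  ext i
  simp only [Finset.mem_filter, Finset.mem_univ, true_and, and_iff_right_iff_imp]
  exact fun _ => i.isLt.trans_le hj

lemma onesUpTo_succ {j : ℕ} (hj : j < m) :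
    onesUpTo x (j + 1) = onesUpTo x j + (x ⟨j, hj⟩).toNat := by
  unfold onesUpTo
  have hsplit : Finset.univ.filter (fun i : Fin m => i.val < j + 1 ∧ x i = true) =
      Finset.univ.filter (fun i : Fin m => i.val < j ∧ x i = true) ∪
        Finset.univ.filter (fun i : Fin m => i = ⟨j, hj⟩ ∧ x i = true) := by
    ext i
    simp only [Finset.mem_union, Finset.mem_filter, Finset.mem_univ, true_and, Fin.ext_iff]
    rw [← or_and_right, Nat.lt_succ_iff_lt_or_eq]
  rw [hsplit, Finset.card_union_of_disjoint]
  · congr 1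
    cases hx : x ⟨j, hj⟩ <;> simp [Finset.filter_and, hx, Finset.filter_eq']
  · simp only [Finset.disjoint_filter, Fin.ext_iff]
    omega

lemma hgt_of_le {j : ℕ} (hj : m ≤ j) : hgt x j = 2 * wt x - j := by
  rw [hgt, onesUpTo_eq_wt_of_le x hj]

lemma forall_false_one_le_hgt_iff :
    (∀ j (h : j < m), x ⟨j, h⟩ = false → 1 ≤ hgt x j) ↔ ∀ j ≤ m, j ≤ 2 * onesUpTo x j := by
  constructor
  · intro hpos j hj
    induction j with
    | zero => exact Nat.zero_le _
    | succ j ih =>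
      have hjm : j < m := hj
      have ih := ih hjm.le
      rw [onesUpTo_succ x hjm]
      cases hb : x ⟨j, hjm⟩
      · have := hpos j hjm hb
        simp only [hgt] at this
        simp only [Bool.toNat_false]
        omega
      · simp only [Bool.toNat_true]
        omega
  · intro hnonneg j hj h0
    have := hnonneg (j + 1) hj
    rw [onesUpTo_succ x hj, h0, Bool.toNat_false] at this
    simp only [hgt]
    omega

lemma exists_false_hgt_eq_one_iff (hnonneg : ∀ j ≤ m, j ≤ 2 * onesUpTo x j) :
    (∃ j, ∃ h : j < m, x ⟨j, h⟩ = false ∧ hgt x j = 1) ↔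
      ∃ j, 1 ≤ j ∧ j ≤ m ∧ j = 2 * onesUpTo x j := by
  constructor
  · rintro ⟨j, hj, h0, hh⟩
    refine ⟨j + 1, by omega, hj, ?_⟩
    rw [onesUpTo_succ x hj, h0, Bool.toNat_false]
    simp only [hgt] at hh
    omega
  · rintro ⟨_ | j, hj1, hjm, hj⟩
    · omega
    have hlt : j < m := hjm
    have hprev := hnonneg j hlt.le
    rw [onesUpTo_succ x hlt] at hj
    cases hb : x ⟨j, hlt⟩
    · refine ⟨j, hlt, hb, ?_⟩
      rw [hb, Bool.toNat_false] at hj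
      simp only [hgt]
      omega
    · rw [hb, Bool.toNat_true] at hj
      omega

end Prefix

section Init

variable {m : ℕ} (x : Fin (m + 1) → Bool)

lemma onesUpTo_init {j : ℕ} (hj : j ≤ m) : onesUpTo (Fin.init x) j = onesUpTo x j := by
  rw [onesUpTo, onesUpTo, Finset.card_filter, Finset.card_filter, Fin.sum_univ_castSucc]
  simp [Fin.init, Nat.not_lt.mpr hj, -Finset.sum_boole]
  rfl

lemma wt_eq_wt_init_add : wt x = wt (Fin.init x) + (x (Fin.last m)).toNat := by
  rw [wt, wt, Finset.card_filter, Finset.card_filter, Fin.sum_univ_castSucc]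
  cases x (Fin.last m) <;> simp [Fin.init, -Finset.sum_boole] <;> rfl

lemma inDeq0_iff_inDeq0_init {k k' : ℕ} (hk : wt x = k) (hk' : wt (Fin.init x) = k')
    (hend : 2 * k = m + 2) : inDeq0 (m + 1) k x ↔ inDeq0 m k' (Fin.init x) := by
  have hlast : onesUpTo x (m + 1) = k := (onesUpTo_eq_wt_of_le x le_rfl).trans hk
  have hpath : (∀ j ≤ m + 1, j ≤ 2 * onesUpTo x j) ↔
      ∀ j ≤ m, j ≤ 2 * onesUpTo (Fin.init x) j := by
    constructor
    · intro h j hj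
      rw [onesUpTo_init x hj]
      exact h j (by omega)
    · intro h j hj
      by_cases hjm : j ≤ m
      · rw [← onesUpTo_init x hjm]
        exact h j hjm
      · obtain rfl : j = m + 1 := by omega
        omega
  have hreturn : (∃ j, 1 ≤ j ∧ j ≤ m + 1 ∧ j = 2 * onesUpTo x j) ↔
      ∃ j, 1 ≤ j ∧ j ≤ m ∧ j = 2 * onesUpTo (Fin.init x) j := by
    constructor
    · rintro ⟨j, hj1, hj, hjr⟩
      by_cases hjm : j ≤ m
      · exact ⟨j, hj1, hjm, (onesUpTo_init x hjm).symm ▸ hjr⟩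
      · obtain rfl : j = m + 1 := by omega
        omega
    · rintro ⟨j, hj1, hj, hjr⟩
      exact ⟨j, hj1, hj.trans m.le_succ, (onesUpTo_init x hj) ▸ hjr⟩
  simp only [inDeq0, inD, hk, hk', true_and, hpath, hreturn]

end Init

section DownSteps

variable {m : ℕ} (x : Fin m → Bool)

def downSteps : Finset ℕ :=
  Finset.range (extLen x) \ (Finset.univ.filter fun i => x i = true).map Fin.valEmbedding

lemma mem_downSteps {j : ℕ} : j ∈ downSteps x ↔ isDownStep x j := by
  simp only [downSteps, isDownStep, Finset.mem_sdiff, Finset.mem_range, Finset.mem_map,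
    Finset.mem_filter, Finset.mem_univ, true_and, Fin.valEmbedding_apply, not_exists, not_and]
  refine and_congr_right fun _ => ⟨fun h hj => ?_, fun h i hi hij => ?_⟩
  · simpa using h ⟨j, hj⟩
  · subst hij
    simp [h i.isLt] at hi

lemma card_downSteps : (downSteps x).card = extLen x - wt x := by
  rw [downSteps, Finset.card_sdiff_of_subset, Finset.card_range, Finset.card_map, wt]
  intro j hj
  obtain ⟨i, -, rfl⟩ := Finset.mem_map.mp hj
  exact Finset.mem_range.mpr (i.isLt.trans_le (le_max_left _ _))

lemma isDownStep_iff_of_lt {j : ℕ} (hj : j < m) : isDownStep x j ↔ x ⟨j, hj⟩ = false :=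
  ⟨fun h => h.2 hj, fun h => ⟨hj.trans_le (le_max_left _ _), fun _ => h⟩⟩

/-- Sorting by `lexKey` ascending lists the down-steps in the order of the lexical matchings:
decreasing starting height, ties from right to left. -/
def lexKey (j : ℕ) : ℤ ×ₗ ℤ := toLex (-hgt x j, -(j : ℤ))

def lexRank (d : ℕ) : ℕ := ((downSteps x).filter fun j => lexKey x j < lexKey x d).card

variable {x}

lemma lexKey_lt_iff {j d : ℕ} :
    lexKey x j < lexKey x d ↔ hgt x d < hgt x j ∨ (hgt x j = hgt x d ∧ d < j) := by
  simp only [lexKey, Prod.Lex.toLex_lt_toLex]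
  omega

lemma lexKey_le_iff {j d : ℕ} :
    lexKey x d ≤ lexKey x j ↔ hgt x j < hgt x d ∨ (hgt x j = hgt x d ∧ j ≤ d) := by
  simp only [lexKey, Prod.Lex.toLex_le_toLex]
  omega

lemma lexKey_injective : Function.Injective (lexKey x) := fun j d h => by
  simpa [lexKey] using congrArg (fun p => (ofLex p).2) h

lemma exists_lexUp_iff {k i : ℕ} :
    (∃ y, lexUp m k i x y) ↔
      wt x = k ∧ ∃ d, ∃ h : d < m, x ⟨d, h⟩ = false ∧ lexRank x d = i := by
  have hrank (d : ℕ) : {j : ℕ | isDownStep x j ∧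
      (hgt x d < hgt x j ∨ (hgt x j = hgt x d ∧ d < j))}.ncard = lexRank x d := by
    rw [lexRank, ← Set.ncard_coe_finset]
    congr 1
    ext j
    simp [mem_downSteps, lexKey_lt_iff]
  simp only [lexUp, hrank]
  constructor
  · rintro ⟨-, hk, d, hd, hds, hrk, -⟩
    exact ⟨hk, d, hd, (isDownStep_iff_of_lt x hd).mp hds, hrk⟩
  · rintro ⟨hk, d, hd, h0, hrk⟩
    exact ⟨_, hk, d, hd, (isDownStep_iff_of_lt x hd).mpr h0, hrk, rfl⟩

lemma lexRank_add_card_filter_le (d : ℕ) :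
    lexRank x d + ((downSteps x).filter fun j => lexKey x d ≤ lexKey x j).card =
      (downSteps x).card := by
  rw [lexRank, ← Finset.card_filter_add_card_filter_not (s := downSteps x)
    (fun j => lexKey x j < lexKey x d)]
  simp only [not_lt]

lemma lexRank_add_card_le {d : ℕ} {T : Finset ℕ}
    (hT : T ⊆ (downSteps x).filter fun j => lexKey x d ≤ lexKey x j) :
    lexRank x d + T.card ≤ (downSteps x).card :=
  lexRank_add_card_filter_le d ▸ Nat.add_le_add_left (Finset.card_le_card hT) _

lemma card_le_lexRank_add {d : ℕ} {T : Finset ℕ}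
    (hT : (downSteps x).filter (fun j => lexKey x d ≤ lexKey x j) ⊆ T) :
    (downSteps x).card ≤ lexRank x d + T.card :=
  lexRank_add_card_filter_le d ▸ Nat.add_le_add_left (Finset.card_le_card hT) _

end DownSteps

section EndsAtHeightOne

variable {n : ℕ} {x : Fin (2 * n + 1) → Bool} (hx : wt x = n + 1)
include hx

lemma extLen_eq : extLen x = 2 * n + 3 := by
  rw [extLen, hx]
  omega

lemma card_downSteps_eq : (downSteps x).card = n + 2 := by
  rw [card_downSteps, extLen_eq hx, hx]
  omega

lemma mem_downSteps_iff {j : ℕ} :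
    j ∈ downSteps x ↔ (∃ h : j < 2 * n + 1, x ⟨j, h⟩ = false) ∨ j = 2 * n + 1 ∨ j = 2 * n + 2 := by
  rw [mem_downSteps]
  by_cases hj : j < 2 * n + 1
  · simp only [isDownStep_iff_of_lt x hj, hj, exists_true_left, iff_self_or]
    omega
  · simp only [isDownStep, extLen_eq hx, hj, IsEmpty.forall_iff, IsEmpty.exists_iff, and_true,
      false_or]
    omega

lemma hgt_two_mul_add_one : hgt x (2 * n + 1) = 1 := by
  rw [hgt_of_le x le_rfl, hx]
  push_cast
  ring

lemma hgt_two_mul_add_two : hgt x (2 * n + 2) = 0 := by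
  rw [hgt_of_le x (by omega), hx]
  push_cast
  ring

lemma mem_downSteps_of_false {j : ℕ} (hj : j < 2 * n + 1) (h0 : x ⟨j, hj⟩ = false) :
    j ∈ downSteps x :=
  (mem_downSteps_iff hx).mpr (Or.inl ⟨hj, h0⟩)

lemma lexRank_le_of_one_le_hgt {d : ℕ} (hd : d ∈ downSteps x) (hpos : 1 ≤ hgt x d) :
    lexRank x d ≤ n := by
  have hT : {d, 2 * n + 2} ⊆ (downSteps x).filter fun j => lexKey x d ≤ lexKey x j := by
    intro j hj
    simp only [Finset.mem_insert, Finset.mem_singleton] at hj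
    rcases hj with rfl | rfl
    · exact Finset.mem_filter.mpr ⟨hd, le_rfl⟩
    · refine Finset.mem_filter.mpr ⟨(mem_downSteps_iff hx).mpr (by omega), ?_⟩
      rw [lexKey_le_iff, hgt_two_mul_add_two hx]
      omega
  have hne : d ≠ 2 * n + 2 := by
    rintro rfl
    rw [hgt_two_mul_add_two hx] at hpos
    omega
  have := lexRank_add_card_le hT
  rw [Finset.card_pair hne, card_downSteps_eq hx] at this
  omega

lemma lexRank_lt_of_two_le_hgt {d : ℕ} (hd : d ∈ downSteps x) (htwo : 2 ≤ hgt x d) :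
    lexRank x d < n := by
  have hT : {d, 2 * n + 1, 2 * n + 2} ⊆
      (downSteps x).filter fun j => lexKey x d ≤ lexKey x j := by
    intro j hj
    simp only [Finset.mem_insert, Finset.mem_singleton] at hj
    rcases hj with rfl | rfl | rfl
    · exact Finset.mem_filter.mpr ⟨hd, le_rfl⟩
    · refine Finset.mem_filter.mpr ⟨(mem_downSteps_iff hx).mpr (by omega), ?_⟩
      rw [lexKey_le_iff, hgt_two_mul_add_one hx]
      omega
    · refine Finset.mem_filter.mpr ⟨(mem_downSteps_iff hx).mpr (by omega), ?_⟩
      rw [lexKey_le_iff, hgt_two_mul_add_two hx]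
      omega
  have hd1 : d ≠ 2 * n + 1 := by
    rintro rfl
    rw [hgt_two_mul_add_one hx] at htwo
    omega
  have hd2 : d ≠ 2 * n + 2 := by
    rintro rfl
    rw [hgt_two_mul_add_two hx] at htwo
    omega
  have := lexRank_add_card_le hT
  rw [Finset.card_insert_of_notMem (by simp [hd1, hd2]), Finset.card_pair (by omega),
    card_downSteps_eq hx] at this
  omega

lemma exists_lexRank_eq_succ {j : ℕ} (hj : j < 2 * n + 1) (h0 : x ⟨j, hj⟩ = false)
    (hneg : hgt x j ≤ 0) :
    ∃ d, ∃ h : d < 2 * n + 1, x ⟨d, h⟩ = false ∧ lexRank x d = n + 1 := by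
  obtain ⟨e, he, hmax⟩ := (downSteps x).exists_max_image (lexKey x)
    ⟨j, mem_downSteps_of_false hx hj h0⟩
  have hrank : lexRank x e = n + 1 := by
    have hT : (downSteps x).filter (fun i => lexKey x e ≤ lexKey x i) ⊆ {e} := by
      intro i hi
      obtain ⟨hi, hle⟩ := Finset.mem_filter.mp hi
      exact Finset.mem_singleton.mpr (lexKey_injective (le_antisymm (hmax i hi) hle))
    have hT' : {e} ⊆ (downSteps x).filter (fun i => lexKey x e ≤ lexKey x i) :=
      Finset.singleton_subset_iff.mpr (Finset.mem_filter.mpr ⟨he, le_rfl⟩)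
    have h1 := card_le_lexRank_add hT
    have h2 := lexRank_add_card_le hT'
    rw [Finset.card_singleton, card_downSteps_eq hx] at h1 h2
    omega
  rcases (mem_downSteps_iff hx).mp he with ⟨he, he0⟩ | rfl | rfl
  · exact ⟨e, he, he0, hrank⟩
  · have := hmax _ ((mem_downSteps_iff hx).mpr (Or.inr (Or.inr rfl)))
    rw [lexKey_le_iff, hgt_two_mul_add_one hx, hgt_two_mul_add_two hx] at this
    omega
  · have := hmax j (mem_downSteps_of_false hx hj h0)
    rw [lexKey_le_iff, hgt_two_mul_add_two hx] at this
    omega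

lemma exists_lexRank_eq {j : ℕ} (hj : j < 2 * n + 1) (h0 : x ⟨j, hj⟩ = false)
    (hone : hgt x j = 1) (hpos : ∀ i (h : i < 2 * n + 1), x ⟨i, h⟩ = false → 1 ≤ hgt x i) :
    ∃ d, ∃ h : d < 2 * n + 1, x ⟨d, h⟩ = false ∧ lexRank x d = n := by
  classical
  have hex : ∃ i, ∃ h : i < 2 * n + 1, x ⟨i, h⟩ = false ∧ hgt x i = 1 := ⟨j, hj, h0, hone⟩
  obtain ⟨hd, hd0, hd1⟩ := Nat.find_spec hex
  set d := Nat.find hex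
  have hdD := mem_downSteps_of_false hx hd hd0
  have hT : (downSteps x).filter (fun i => lexKey x d ≤ lexKey x i) ⊆ {d, 2 * n + 2} := by
    intro i hi
    obtain ⟨hi, hle⟩ := Finset.mem_filter.mp hi
    rw [lexKey_le_iff, hd1] at hle
    simp only [Finset.mem_insert, Finset.mem_singleton]
    rcases (mem_downSteps_iff hx).mp hi with ⟨hi, hi0⟩ | rfl | rfl
    · have := hpos i hi hi0
      have := Nat.find_min' hex ⟨hi, hi0, by omega⟩
      omega
    · rw [hgt_two_mul_add_one hx] at hle
      omega
    · omega
  have := card_le_lexRank_add hT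
  rw [Finset.card_pair (by omega), card_downSteps_eq hx] at this
  exact ⟨d, hd, hd0, le_antisymm (lexRank_le_of_one_le_hgt hx hdD (by omega)) (by omega)⟩

lemma exists_lexRank_eq_succ_iff :
    (∃ d, ∃ h : d < 2 * n + 1, x ⟨d, h⟩ = false ∧ lexRank x d = n + 1) ↔
      ∃ j, ∃ h : j < 2 * n + 1, x ⟨j, h⟩ = false ∧ hgt x j < 1 := by
  constructor
  · rintro ⟨d, hd, hd0, hrank⟩
    refine ⟨d, hd, hd0, ?_⟩
    by_contra hpos
    have := lexRank_le_of_one_le_hgt hx (mem_downSteps_of_false hx hd hd0) (by omega)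
    omega
  · rintro ⟨j, hj, h0, hneg⟩
    exact exists_lexRank_eq_succ hx hj h0 (by omega)

lemma exists_lexRank_eq_iff (hpos : ∀ j (h : j < 2 * n + 1), x ⟨j, h⟩ = false → 1 ≤ hgt x j) :
    (∃ d, ∃ h : d < 2 * n + 1, x ⟨d, h⟩ = false ∧ lexRank x d = n) ↔
      ∃ j, ∃ h : j < 2 * n + 1, x ⟨j, h⟩ = false ∧ hgt x j = 1 := by
  constructor
  · rintro ⟨d, hd, hd0, hrank⟩
    refine ⟨d, hd, hd0, le_antisymm ?_ (hpos d hd hd0)⟩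
    by_contra htwo
    have := lexRank_lt_of_two_le_hgt hx (mem_downSteps_of_false hx hd hd0) (by omega)
    omega
  · rintro ⟨j, hj, h0, hone⟩
    exact exists_lexRank_eq hx hj h0 hone hpos

theorem exists_lexUp_and_not_exists_lexUp_succ_iff :
    ((∃ y, lexUp (2 * n + 1) (n + 1) n x y) ∧ ¬ ∃ y, lexUp (2 * n + 1) (n + 1) (n + 1) x y) ↔
      inDeq0 (2 * n + 1) (n + 1) x := by
  simp only [exists_lexUp_iff, hx, true_and, exists_lexRank_eq_succ_iff hx, not_exists, not_and,
    not_lt, inDeq0, inD, ← forall_false_one_le_hgt_iff]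
  rw [and_comm]
  refine and_congr_right fun hpos => ?_
  rw [exists_lexRank_eq_iff hx hpos,
    exists_false_hgt_eq_one_iff x ((forall_false_one_le_hgt_iff x).mp hpos)]

end EndsAtHeightOne

end LexMatching

open LexMatching

theorem first_vertices_by_last_bit_general (n : ℕ)
    (x : Fin (2 * n + 1) → Bool) (hx : wt x = n + 1) :
    (x (Fin.last (2 * n)) = false →
      (((∃ y, lexUp (2 * n + 1) (n + 1) n x y) ∧
          ¬ (∃ y, lexUp (2 * n + 1) (n + 1) (n + 1) x y)) ↔
        inDeq0 (2 * n) (n + 1) (Fin.init x))) ∧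
    (x (Fin.last (2 * n)) = true →
      (((∃ y, lexUp (2 * n + 1) (n + 1) n x y) ∧
          ¬ (∃ y, lexUp (2 * n + 1) (n + 1) (n + 1) x y)) ↔
        inDeq0 (2 * n) n (Fin.init x))) := by
  have hend : 2 * (n + 1) = 2 * n + 2 := by ring
  have hwt := wt_eq_wt_init_add x
  rw [exists_lexUp_and_not_exists_lexUp_succ_iff hx]
  constructor <;> intro hlast <;> rw [hlast] at hwt
  · exact inDeq0_iff_inDeq0_init x hx (by rw [hx, Bool.toNat_false] at hwt; omega) hend
  · exact inDeq0_iff_inDeq0_init x hx (by rw [hx, Bool.toNat_true] at hwt; omega) hend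

/-- For the two lexical matchings `M^n_{2n+1,n+1}` and `M^{n+1}_{2n+1,n+1}` between levels
`n+1` and `n+2` of the `(2n+1)`-cube and a vertex `x` of level `n+1`: if the last bit of `x`
is 0, then `x` is matched by the first matching and unmatched by the second iff `x = y∘0`
with `y ∈ D^{=0}_{2n,n+1}`; if the last bit of `x` is 1, then `x` is matched by the first
matching and unmatched by the second iff `x = y∘1` with `y ∈ D^{=0}_{2n,n}`. -/
theorem first_vertices_by_last_bit (n : ℕ) (hn : 1 ≤ n)
    (x : Fin (2 * n + 1) → Bool) (hx : wt x = n + 1) :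
    (x (Fin.last (2 * n)) = false →
      (((∃ y, lexUp (2 * n + 1) (n + 1) n x y) ∧
          ¬ (∃ y, lexUp (2 * n + 1) (n + 1) (n + 1) x y)) ↔
        inDeq0 (2 * n) (n + 1) (Fin.init x))) ∧
    (x (Fin.last (2 * n)) = true →
      (((∃ y, lexUp (2 * n + 1) (n + 1) n x y) ∧
          ¬ (∃ y, lexUp (2 * n + 1) (n + 1) (n + 1) x y)) ↔
        inDeq0 (2 * n) n (Fin.init x))) :=
  first_vertices_by_last_bit_general n x hx
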